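/- arXiv:1512.00378 — 6 statements merged into one kernel-verified Lean document; each statement's English description precedes it below -/
import Mathlib

section
/- For any string S of length n, any k, and any position p ≥ 2 such that lsus_p^k exists: |lsus_p^k| ≥ |lsus_{p−1}^k| − 1, where |lsus_p^k| denotes the length of the k-mismatch LSUS starting at position p. -/
/-- Number of mismatches between the length-`ℓ` windows of `S` starting at `i` and `j`. -/
def mis {α : Type*} [DecidableEq α] (S : ℕ → α) (i j ℓ : ℕ) : ℕ :=
  ((Finset.range ℓ).filter (fun d => S (i + d) ≠ S (j + d))).card

/-- `S[i..j]` is a `k`-mismatch repeat (there is another same-length window within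
Hamming distance `k`). -/
def kRepeat {α : Type*} [DecidableEq α] (S : ℕ → α) (n k i j : ℕ) : Prop :=
  ∃ i', i' ≠ i ∧ 1 ≤ i' ∧ i' + (j - i) ≤ n ∧ mis S i i' (j - i + 1) ≤ k

/-- `S[i..j]` is `k`-mismatch unique. -/
def kUnique {α : Type*} [DecidableEq α] (S : ℕ → α) (n k i j : ℕ) : Prop :=
  ¬ kRepeat S n k i j

/-- `S[i..e]` is the `k`-mismatch LSUS starting at `i`: it is `k`-mismatch unique and
every proper prefix `S[i..j]`, `i ≤ j < e`, is a `k`-mismatch repeat. -/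
def isLSUS {α : Type*} [DecidableEq α] (S : ℕ → α) (n k i e : ℕ) : Prop :=
  1 ≤ i ∧ i ≤ e ∧ e ≤ n ∧ kUnique S n k i e ∧ ∀ j, i ≤ j → j < e → kRepeat S n k i j

/-- `S[i..j]` is a `k`-mismatch SUS covering position `p`: a minimum-length
`k`-mismatch unique substring covering `p`. -/
def isSUS {α : Type*} [DecidableEq α] (S : ℕ → α) (n k p i j : ℕ) : Prop :=
  1 ≤ i ∧ i ≤ p ∧ p ≤ j ∧ j ≤ n ∧ kUnique S n k i j ∧
    ∀ i' j', 1 ≤ i' → i' ≤ p → p ≤ j' → j' ≤ n → kUnique S n k i' j' → j - i ≤ j' - i'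


lemma mis_succ_le {α : Type*} [DecidableEq α] (S : ℕ → α) (i j ℓ : ℕ) :
    mis S (i + 1) (j + 1) ℓ ≤ mis S i j (ℓ + 1) := by
  unfold mis
  apply Finset.card_le_card_of_injOn (· + 1)
  · intro e he
    simp only [Finset.mem_coe, Finset.mem_filter, Finset.mem_range] at he ⊢
    constructor
    · omega
    · have h1 : i + (e + 1) = i + 1 + e := by omega
      have h2 : j + (e + 1) = j + 1 + e := by omega
      rw [h1, h2]; exact he.2
  · intro a _ b _ h; simpa using h

/-- `|lsus_p^k| ≥ |lsus_{p−1}^k| − 1`. -/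
theorem lsus_length_lower_bound {α : Type*} [DecidableEq α] (S : ℕ → α) (n k p ep e' : ℕ)
    (hp : 2 ≤ p) (h1 : isLSUS S n k p ep) (h2 : isLSUS S n k (p - 1) e') :
    (e' - (p - 1) + 1) - 1 ≤ ep - p + 1 := by
  obtain ⟨_, hpe, hen, hu, _⟩ := h1
  obtain ⟨_, _, _, _, hmin⟩ := h2
  -- S[p-1..ep] is k-unique
  have huniq : kUnique S n k (p - 1) ep := by
    intro ⟨i', hne, hi1, hin, hmis⟩
    apply hu
    refine ⟨i' + 1, ?_, by omega, by omega, ?_⟩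
    · omega
    · have h1 : ep - (p - 1) + 1 = (ep - p + 1) + 1 := by omega
      have h2 : p - 1 + 1 = p := by omega
      calc mis S p (i' + 1) (ep - p + 1) = mis S (p - 1 + 1) (i' + 1) (ep - p + 1) := by
            rw [h2]
        _ ≤ mis S (p - 1) i' (ep - p + 1 + 1) := mis_succ_le S (p - 1) i' _
        _ ≤ k := by rw [← h1]; exact hmis
  have : e' ≤ ep := by
    by_contra hlt
    exact huniq (hmin ep (by omega) (by omega))
  omega
end

section
/- For any string S of length n, k ≥ 0, and position p: every shortest unique substring sus_p^k = S[i..j] is either equal to lsus_i^k or is a right extension of lsus_i^k with j = p. Consequently, sus_p^k is either the shortest k-mismatch LSUS covering p, or a right extension through p of some k-mismatch LSUS. -/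
lemma mis_mono {α : Type*} [DecidableEq α] (S : ℕ → α) (i j : ℕ) {ℓ ℓ' : ℕ} (h : ℓ ≤ ℓ') :
    mis S i j ℓ ≤ mis S i j ℓ' :=
  Finset.card_le_card (Finset.filter_subset_filter _ (Finset.range_subset_range.2 h))

lemma kUnique_extend {α : Type*} [DecidableEq α] (S : ℕ → α) (n k i e e' : ℕ)
    (hi : i ≤ e) (h : e ≤ e') (hu : kUnique S n k i e) : kUnique S n k i e' := by
  rintro ⟨i', hne, h1, hle, hmis⟩
  exact hu ⟨i', hne, h1, by omega, le_trans (mis_mono S i i' (by omega)) hmis⟩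

/-- every `sus_p^k = S[i..j]` is either `lsus_i^k` itself or a strict right
extension of `lsus_i^k` ending exactly at `p`. -/
theorem sus_is_lsus_or_extension {α : Type*} [DecidableEq α] (S : ℕ → α) (n k p i j e : ℕ)
    (hsus : isSUS S n k p i j) (hlsus : isLSUS S n k i e) :
    j = e ∨ (e < j ∧ j = p) := by
  obtain ⟨hi1, hip, hpj, hjn, huj, hmin⟩ := hsus
  obtain ⟨_, hie, hen, hue, hrep⟩ := hlsus
  by_cases hje : j = e
  · exact Or.inl hje
  have hej : e < j := by
    rcases lt_or_gt_of_ne hje with h | h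
    · exact absurd (hrep j (hip.trans hpj) h) huj
    · exact h
  refine Or.inr ⟨hej, ?_⟩
  by_contra hjp
  have hpj' : p < j := lt_of_le_of_ne hpj (fun h => hjp h.symm)
  set j' := max e p with hj'
  have hu' : kUnique S n k i j' :=
    kUnique_extend S n k i e j' hie (le_max_left _ _) hue
  have := hmin i j' hi1 hip (le_max_right _ _) (by omega) hu'
  omega
end

section
/- For a string S of length n, the 0-mismatch LSUS starting at position i exists if and only if i + max{x_i, y_i} ≤ n, and in that case lsus_i^0 = S[i .. i + max{x_i, y_i}], where x_i and y_i are the lengths of the longest common prefixes of the suffix S[i..n] with its lexicographic predecessor and successor suffixes respectively (taken as 0 when no such neighbor exists). -/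
/-- The suffix of `S` (of length `n`, positions `1..n`) starting at position `i`, as a list. -/
def sfx {α : Type*} (S : ℕ → α) (n i : ℕ) : List α :=
  (List.range (n + 1 - i)).map (fun d => S (i + d))

/-- Length of the longest common prefix of two lists. -/
def lcpLen {α : Type*} [DecidableEq α] : List α → List α → ℕ
  | a :: as, b :: bs => if a = b then lcpLen as bs + 1 else 0
  | _, _ => 0

section AuxLemmas

variable {α : Type*}

lemma lcpLen_nil_left [DecidableEq α] (v : List α) : lcpLen ([] : List α) v = 0 := by
  cases v <;> rfl

lemma lcpLen_nil_right [DecidableEq α] (u : List α) : lcpLen u ([] : List α) = 0 := by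
  cases u <;> rfl

lemma lcpLen_cons [DecidableEq α] (a b : α) (as bs : List α) :
    lcpLen (a :: as) (b :: bs) = if a = b then lcpLen as bs + 1 else 0 := rfl

lemma lcpLen_le_left [DecidableEq α] : ∀ u v : List α, lcpLen u v ≤ u.length
  | [], v => by simp [lcpLen_nil_left]
  | _ :: _, [] => by simp [lcpLen_nil_right]
  | a :: as, b :: bs => by
    rw [lcpLen_cons]
    split
    · simpa using lcpLen_le_left as bs
    · simp

lemma lcpLen_le_right [DecidableEq α] : ∀ u v : List α, lcpLen u v ≤ v.length
  | [], v => by simp [lcpLen_nil_left]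
  | _ :: _, [] => by simp [lcpLen_nil_right]
  | a :: as, b :: bs => by
    rw [lcpLen_cons]
    split
    · simpa using lcpLen_le_right as bs
    · simp

lemma lcpLen_comm [DecidableEq α] : ∀ u v : List α, lcpLen u v = lcpLen v u
  | [], v => by simp [lcpLen_nil_left, lcpLen_nil_right]
  | _ :: _, [] => by simp [lcpLen_nil_left, lcpLen_nil_right]
  | a :: as, b :: bs => by
    rw [lcpLen_cons, lcpLen_cons]
    by_cases h : a = b
    · simp [h, lcpLen_comm as bs]
    · simp [h, Ne.symm h]

lemma take_lcpLen [DecidableEq α] : ∀ u v : List α,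
    u.take (lcpLen u v) = v.take (lcpLen u v)
  | [], v => by simp [lcpLen_nil_left]
  | _ :: _, [] => by simp [lcpLen_nil_right]
  | a :: as, b :: bs => by
    rw [lcpLen_cons]
    by_cases h : a = b
    · subst h
      simp [take_lcpLen as bs]
    · simp [h]

lemma le_lcpLen [DecidableEq α] : ∀ (ℓ : ℕ) (u v : List α),
    ℓ ≤ u.length → u.take ℓ = v.take ℓ → ℓ ≤ lcpLen u v
  | 0, _, _, _, _ => Nat.zero_le _
  | ℓ+1, [], _, h, _ => by simp at h
  | ℓ+1, a :: as, [], _, ht => by simp at ht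
  | ℓ+1, a :: as, b :: bs, h, ht => by
    simp only [List.take_succ_cons, List.cons.injEq] at ht
    obtain ⟨rfl, ht'⟩ := ht
    rw [lcpLen_cons, if_pos rfl]
    have := le_lcpLen ℓ as bs (by simpa using h) ht'
    omega

lemma lcpLen_le_of_lex_lex [LinearOrder α] : ∀ u v w : List α,
    List.Lex (· < ·) u v → List.Lex (· < ·) v w → lcpLen u w ≤ lcpLen v w
  | [], _, w, _, _ => by simp [lcpLen_nil_left]
  | _ :: _, v, [], _, hvw => by cases hvw
  | a :: as, v, c :: cs, huv, hvw => by
    by_cases hac : a = c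
    · subst hac
      cases huv with
      | cons h =>
        cases hvw with
        | cons h' =>
          rw [lcpLen_cons, if_pos rfl, lcpLen_cons, if_pos rfl]
          have := lcpLen_le_of_lex_lex as _ cs h h'
          omega
        | rel h' => exact absurd h' (lt_irrefl a)
      | rel h =>
        cases hvw with
        | cons h' => exact absurd h (lt_irrefl a)
        | rel h' => exact absurd (h.trans h') (lt_irrefl a)
    · rw [lcpLen_cons, if_neg hac]
      exact Nat.zero_le _

lemma lcpLen_le_of_lex_lex' [LinearOrder α] : ∀ u v w : List α,
    List.Lex (· < ·) u v → List.Lex (· < ·) v w → lcpLen u w ≤ lcpLen u v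
  | [], _, w, _, _ => by simp [lcpLen_nil_left]
  | _ :: _, v, [], _, hvw => by cases hvw
  | a :: as, v, c :: cs, huv, hvw => by
    by_cases hac : a = c
    · subst hac
      cases huv with
      | cons h =>
        cases hvw with
        | cons h' =>
          rw [lcpLen_cons, if_pos rfl, lcpLen_cons, if_pos rfl]
          have := lcpLen_le_of_lex_lex' as _ cs h h'
          omega
        | rel h' => exact absurd h' (lt_irrefl a)
      | rel h =>
        cases hvw with
        | cons h' => exact absurd h (lt_irrefl a)
        | rel h' => exact absurd (h.trans h') (lt_irrefl a)
    · rw [lcpLen_cons, if_neg hac]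
      exact Nat.zero_le _

lemma sfx_length (S : ℕ → α) (n i : ℕ) : (sfx S n i).length = n + 1 - i := by
  simp [sfx]

lemma le_lcpLen_sfx [DecidableEq α] (S : ℕ → α) (n i i' ℓ : ℕ)
    (h1 : i + ℓ ≤ n + 1) (h2 : i' + ℓ ≤ n + 1)
    (hm : ∀ d < ℓ, S (i + d) = S (i' + d)) :
    ℓ ≤ lcpLen (sfx S n i) (sfx S n i') := by
  apply le_lcpLen
  · rw [sfx_length]; omega
  · apply List.ext_getElem
    · simp [sfx_length]; omega
    · intro d hd1 hd2
      have hdℓ : d < ℓ := by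
        have := hd1
        simp [sfx_length] at this
        omega
      simp only [List.getElem_take, sfx, List.getElem_map, List.getElem_range]
      exact hm d hdℓ

lemma lcpLen_sfx_match [DecidableEq α] (S : ℕ → α) (n i i' d : ℕ)
    (h : d < lcpLen (sfx S n i) (sfx S n i')) : S (i + d) = S (i' + d) := by
  have hk := take_lcpLen (sfx S n i) (sfx S n i')
  have h1 : d < (sfx S n i).length := lt_of_lt_of_le h (lcpLen_le_left _ _)
  have h2 : d < (sfx S n i').length := lt_of_lt_of_le h (lcpLen_le_right _ _)
  have := congrArg (fun l => l[d]?) hk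
  simp only [List.getElem?_take, h, if_pos] at this
  rw [List.getElem?_eq_getElem h1, List.getElem?_eq_getElem h2] at this
  simpa [sfx] using this

lemma mis_le_zero_iff [DecidableEq α] (S : ℕ → α) (i i' ℓ : ℕ) :
    mis S i i' ℓ ≤ 0 ↔ ∀ d < ℓ, S (i + d) = S (i' + d) := by
  rw [Nat.le_zero, mis, Finset.card_eq_zero, Finset.filter_eq_empty_iff]
  simp

end AuxLemmas

/-- `lsus_i^0` exists iff `i + max{x_i, y_i} ≤ n`, and in that case it equals
`S[i .. i + max{x_i, y_i}]`, where `x_i`, `y_i` are the LCP lengths of the suffix `S[i..n]`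
with its lexicographic predecessor and successor suffixes. -/
theorem exact_lsus_via_suffix_array {α : Type*} [LinearOrder α] (S : ℕ → α)
    (n : ℕ) (sa rnk : ℕ → ℕ) (i x y : ℕ)
    (hsa : ∀ m, 1 ≤ m → m ≤ n → 1 ≤ sa m ∧ sa m ≤ n)
    (hrnk : ∀ m, 1 ≤ m → m ≤ n → 1 ≤ rnk m ∧ rnk m ≤ n)
    (hinv : ∀ m, 1 ≤ m → m ≤ n → rnk (sa m) = m ∧ sa (rnk m) = m)
    (hsort : ∀ a b, 1 ≤ a → a < b → b ≤ n →
      List.Lex (· < ·) (sfx S n (sa a)) (sfx S n (sa b)))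
    (hi : 1 ≤ i) (hin : i ≤ n)
    (hx : x = if 1 < rnk i then lcpLen (sfx S n i) (sfx S n (sa (rnk i - 1))) else 0)
    (hy : y = if rnk i < n then lcpLen (sfx S n i) (sfx S n (sa (rnk i + 1))) else 0) :
    ((∃ j, i ≤ j ∧ j ≤ n ∧ kUnique S n 0 i j) ↔ i + max x y ≤ n) ∧
      (i + max x y ≤ n → isLSUS S n 0 i (i + max x y)) := by
  have hri := hrnk i hi hin
  have hsai : sa (rnk i) = i := (hinv i hi hin).2
  -- Key bound: the lcp with any other suffix is at most `max x y`.
  have key : ∀ i', 1 ≤ i' → i' ≤ n → i' ≠ i →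
      lcpLen (sfx S n i) (sfx S n i') ≤ max x y := by
    intro i' h1 h2 hne
    have hri' := hrnk i' h1 h2
    have hsai' : sa (rnk i') = i' := (hinv i' h1 h2).2
    have hrne : rnk i' ≠ rnk i := by
      intro h
      exact hne (by rw [← hsai', h, hsai])
    rcases lt_or_gt_of_ne hrne with hlt | hgt
    · -- i' is lexicographically before i
      have h2r : 1 < rnk i := by omega
      have hxx : x = lcpLen (sfx S n i) (sfx S n (sa (rnk i - 1))) := by
        rw [hx, if_pos h2r]
      rcases eq_or_lt_of_le (show rnk i' ≤ rnk i - 1 by omega) with heq | hlt2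
      · have : sa (rnk i - 1) = i' := by rw [← heq, hsai']
        rw [this] at hxx
        rw [← hxx]
        exact le_max_left _ _
      · have lex1 : List.Lex (· < ·) (sfx S n (sa (rnk i'))) (sfx S n (sa (rnk i - 1))) :=
          hsort _ _ hri'.1 hlt2 (by omega)
        have lex2 : List.Lex (· < ·) (sfx S n (sa (rnk i - 1))) (sfx S n (sa (rnk i))) :=
          hsort _ _ (by omega) (by omega) hri.2
        rw [hsai'] at lex1
        rw [hsai] at lex2
        have hb := lcpLen_le_of_lex_lex _ _ _ lex1 lex2
        calc lcpLen (sfx S n i) (sfx S n i')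
            = lcpLen (sfx S n i') (sfx S n i) := lcpLen_comm _ _
          _ ≤ lcpLen (sfx S n (sa (rnk i - 1))) (sfx S n i) := hb
          _ = x := by rw [hxx, lcpLen_comm]
          _ ≤ max x y := le_max_left _ _
    · -- i' is lexicographically after i
      have hrn : rnk i < n := by omega
      have hyy : y = lcpLen (sfx S n i) (sfx S n (sa (rnk i + 1))) := by
        rw [hy, if_pos hrn]
      rcases eq_or_lt_of_le (show rnk i + 1 ≤ rnk i' by omega) with heq | hlt2
      · have : sa (rnk i + 1) = i' := by rw [heq, hsai']
        rw [this] at hyy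
        rw [← hyy]
        exact le_max_right _ _
      · have lex1 : List.Lex (· < ·) (sfx S n (sa (rnk i))) (sfx S n (sa (rnk i + 1))) :=
          hsort _ _ hri.1 (by omega) (by omega)
        have lex2 : List.Lex (· < ·) (sfx S n (sa (rnk i + 1))) (sfx S n (sa (rnk i'))) :=
          hsort _ _ (by omega) hlt2 hri'.2
        rw [hsai] at lex1
        rw [hsai'] at lex2
        have hb := lcpLen_le_of_lex_lex' _ _ _ lex1 lex2
        calc lcpLen (sfx S n i) (sfx S n i')
            ≤ lcpLen (sfx S n i) (sfx S n (sa (rnk i + 1))) := hb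
          _ = y := hyy.symm
          _ ≤ max x y := le_max_right _ _
  -- Any substring shorter than `max x y` has a repeat.
  have repR : ∀ j, i ≤ j → j - i + 1 ≤ max x y → kRepeat S n 0 i j := by
    intro j hij hlen
    rcases max_cases x y with ⟨hmx, _⟩ | ⟨hmy, _⟩
    · -- witness from the lexicographic predecessor
      rw [hmx] at hlen
      have h2r : 1 < rnk i := by
        by_contra hc
        rw [hx, if_neg hc] at hlen
        omega
      have hxx : x = lcpLen (sfx S n i) (sfx S n (sa (rnk i - 1))) := by
        rw [hx, if_pos h2r]
      set i' := sa (rnk i - 1) with hi'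
      have hbd := hsa (rnk i - 1) (by omega) (by omega)
      have hrk : rnk i' = rnk i - 1 := (hinv (rnk i - 1) (by omega) (by omega)).1
      have hne : i' ≠ i := by
        intro h
        rw [h] at hrk
        omega
      have hxle : x ≤ n + 1 - i' := by
        rw [hxx]
        calc lcpLen (sfx S n i) (sfx S n i') ≤ (sfx S n i').length := lcpLen_le_right _ _
          _ = n + 1 - i' := sfx_length _ _ _
      refine ⟨i', hne, hbd.1, by omega, ?_⟩
      rw [mis_le_zero_iff]
      intro d hd
      exact lcpLen_sfx_match S n i i' d (by omega)
    · -- witness from the lexicographic successor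
      rw [hmy] at hlen
      have hrn : rnk i < n := by
        by_contra hc
        rw [hy, if_neg hc] at hlen
        omega
      have hyy : y = lcpLen (sfx S n i) (sfx S n (sa (rnk i + 1))) := by
        rw [hy, if_pos hrn]
      set i' := sa (rnk i + 1) with hi'
      have hbd := hsa (rnk i + 1) (by omega) (by omega)
      have hrk : rnk i' = rnk i + 1 := (hinv (rnk i + 1) (by omega) (by omega)).1
      have hne : i' ≠ i := by
        intro h
        rw [h] at hrk
        omega
      have hyle : y ≤ n + 1 - i' := by
        rw [hyy]
        calc lcpLen (sfx S n i) (sfx S n i') ≤ (sfx S n i').length := lcpLen_le_right _ _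
          _ = n + 1 - i' := sfx_length _ _ _
      refine ⟨i', hne, hbd.1, by omega, ?_⟩
      rw [mis_le_zero_iff]
      intro d hd
      exact lcpLen_sfx_match S n i i' d (by omega)
  -- Any substring of length `> max x y` (inside the string) is unique.
  have uniq : ∀ j, i ≤ j → j ≤ n → max x y ≤ j - i → kUnique S n 0 i j := by
    intro j hij hjn hM
    rintro ⟨i', hne, h1, h2, hmis⟩
    rw [mis_le_zero_iff] at hmis
    have hle : j - i + 1 ≤ lcpLen (sfx S n i) (sfx S n i') :=
      le_lcpLen_sfx S n i i' (j - i + 1) (by omega) (by omega) hmis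
    have := key i' h1 (by omega) hne
    omega
  constructor
  · constructor
    · rintro ⟨j, hij, hjn, hu⟩
      by_contra hnle
      exact hu (repR j hij (by omega))
    · intro hle
      exact ⟨i + max x y, by omega, hle, uniq _ (by omega) hle (by omega)⟩
  · intro hle
    exact ⟨hi, by omega, hle, uniq _ (by omega) hle (by omega),
      fun j hij hjlt => repR j hij (by omega)⟩
end

section
/- Interval selection lemma: Let I_1, ..., I_r be intervals with I_i = [i, B[i]], where B[1..r] is monotonically nondecreasing with i ≤ B[i]. For a position j ≤ B[r], define t_i = max{ i, max{ B[h]+1 : h < i and I_h is strictly shorter than I_i } } (the start of the effective covering region of I_i). Then the index of the rightmost shortest interval covering j equals max{ i : t_i ≤ j ≤ B[i] } = max ∪_{m=1}^{j} t_m^{-1}, where t_m^{-1} = { i : t_i = m }. -/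
/-- Start of the effective covering region of the interval `I_i = [i, B i]`:
`t_i = max{ i, max{ B h + 1 : 1 ≤ h < i, I_h strictly shorter than I_i } }`. -/
def effStart (B : ℕ → ℕ) (i : ℕ) : ℕ :=
  max i (((Finset.Icc 1 (i - 1)).filter (fun h => B h - h < B i - i)).sup
    (fun h => B h + 1))

/-- the index of the rightmost shortest interval covering `j` equals
`max{ i : t_i ≤ j ≤ B i }`, which also equals `max ∪_{m=1}^{j} t_m^{-1}`. -/
theorem rightmost_shortest_eq_max_effective (B : ℕ → ℕ) (r j a : ℕ)
    (hmono : ∀ p q, 1 ≤ p → p ≤ q → q ≤ r → B p ≤ B q)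
    (hib : ∀ i, 1 ≤ i → i ≤ r → i ≤ B i)
    (hr : 1 ≤ r) (hj1 : 1 ≤ j) (hjr : j ≤ B r)
    (ha1 : 1 ≤ a) (har : a ≤ r) (haj : a ≤ j) (hja : j ≤ B a)
    (hshort : ∀ i, 1 ≤ i → i ≤ r → i ≤ j → j ≤ B i → B a - a ≤ B i - i)
    (hright : ∀ i, 1 ≤ i → i ≤ r → i ≤ j → j ≤ B i → B i - i = B a - a → i ≤ a) :
    a = ((Finset.Icc 1 r).filter (fun i => effStart B i ≤ j ∧ j ≤ B i)).sup id ∧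
      a = ((Finset.Icc 1 r).filter (fun i => effStart B i ≤ j)).sup id := by
  have hta : effStart B a ≤ j := by
    simp only [effStart]
    apply max_le haj
    apply Finset.sup_le
    intro h hh
    simp only [Finset.mem_filter, Finset.mem_Icc] at hh
    obtain ⟨⟨hh1, hh2⟩, hhs⟩ := hh
    by_contra hcon
    push_neg at hcon
    have hja' : j ≤ B h := by omega
    have hhr : h ≤ r := by omega
    have hhj : h ≤ j := by omega
    have := hshort h hh1 hhr hhj hja'
    omega
  have key : ∀ i, 1 ≤ i → i ≤ r → effStart B i ≤ j → i ≤ a := by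
    intro i hi1 hir hti
    by_contra hcon
    push_neg at hcon
    have hii : i ≤ effStart B i := le_max_left _ _
    have hij : i ≤ j := le_trans hii hti
    have hBi : j ≤ B i := le_trans hja (hmono a i ha1 (le_of_lt hcon) hir)
    have hle := hshort i hi1 hir hij hBi
    rcases eq_or_lt_of_le hle with heq | hlt
    · exact absurd (hright i hi1 hir hij hBi heq.symm) (by omega)
    · have hmem : a ∈ (Finset.Icc 1 (i - 1)).filter (fun h => B h - h < B i - i) := by
        simp only [Finset.mem_filter, Finset.mem_Icc]
        exact ⟨⟨ha1, by omega⟩, hlt⟩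
      have h1 := Finset.le_sup (f := fun h => B h + 1) hmem
      have h2 : B a + 1 ≤ effStart B i := le_trans h1 (le_max_right _ _)
      omega
  constructor
  · apply le_antisymm
    · exact Finset.le_sup (f := id) (by
        simp only [Finset.mem_filter, Finset.mem_Icc]
        exact ⟨⟨ha1, har⟩, hta, hja⟩)
    · apply Finset.sup_le
      intro i hi
      simp only [Finset.mem_filter, Finset.mem_Icc] at hi
      exact key i hi.1.1 hi.1.2 hi.2.1
  · apply le_antisymm
    · exact Finset.le_sup (f := id) (by
        simp only [Finset.mem_filter, Finset.mem_Icc]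
        exact ⟨⟨ha1, har⟩, hta⟩)
    · apply Finset.sup_le
      intro i hi
      simp only [Finset.mem_filter, Finset.mem_Icc] at hi
      exact key i hi.1.1 hi.1.2 hi.2
end

section
/- For the same-index case: if for position p the shortest k-mismatch LSUS covering p (sls_p^k) does not exist (no k-mismatch LSUS covers p), then sus_p^k is a strict right extension through p of some k-mismatch LSUS; combined with the extension lemma, sus_p^k = sus_{p−1}^k appended with S[p]. -/
lemma kUnique_mono {α : Type*} [DecidableEq α] (S : ℕ → α) (n k i : ℕ) {e j : ℕ}
    (h : kUnique S n k i e) (hie : i ≤ e) (hej : e ≤ j) : kUnique S n k i j := by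
  rintro ⟨i', hne, h1, hnn, hm⟩
  refine h ⟨i', hne, h1, le_trans (by omega) hnn, le_trans ?_ hm⟩
  exact Finset.card_le_card (Finset.filter_subset_filter _ (Finset.range_subset_range.2 (by omega)))

/-- if no `k`-mismatch LSUS covers `p`, then any `sus_p^k = S[i..j]` ends
at `p`, is a strict right extension through `p` of `lsus_i^k`, and `S[i..p−1]` is a
`sus_{p−1}^k` (so `sus_p^k = sus_{p−1}^k · S[p]`). -/
theorem sus_when_no_sls {α : Type*} [DecidableEq α] (S : ℕ → α) (n k p i j : ℕ)
    (hp : 2 ≤ p) (hpn : p ≤ n)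
    (hnone : ∀ i' e, isLSUS S n k i' e → ¬ (i' ≤ p ∧ p ≤ e))
    (hsus : isSUS S n k p i j) :
    j = p ∧ (∃ e, i ≤ e ∧ e < p ∧ isLSUS S n k i e) ∧ isSUS S n k (p - 1) i (p - 1) := by
  obtain ⟨h1i, hip, hpj, hjn, huniq, hmin⟩ := hsus
  classical
  have hex : ∃ e, i ≤ e ∧ kUnique S n k i e := ⟨j, le_trans hip hpj, huniq⟩
  set e := Nat.find hex with he
  have hPe : i ≤ e ∧ kUnique S n k i e := Nat.find_spec hex
  have hej : e ≤ j := Nat.find_min' hex ⟨le_trans hip hpj, huniq⟩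
  have hlsus : isLSUS S n k i e := by
    refine ⟨h1i, hPe.1, le_trans hej hjn, hPe.2, ?_⟩
    intro j' hij' hj'e
    by_contra hrep
    exact Nat.find_min hex hj'e ⟨hij', hrep⟩
  have hep : e < p := by
    by_contra h
    exact hnone i e hlsus ⟨hip, by omega⟩
  have hjp : j = p := by
    by_contra h
    have hu : kUnique S n k i (j - 1) := kUnique_mono S n k i hPe.2 hPe.1 (by omega)
    have := hmin i (j - 1) h1i hip (by omega) (by omega) hu
    omega
  refine ⟨hjp, ⟨e, hPe.1, hep, hlsus⟩, ?_⟩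
  refine ⟨h1i, by omega, le_refl _, by omega,
    kUnique_mono S n k i hPe.2 hPe.1 (by omega), ?_⟩
  intro i' j' h1' hi'p hpj' hj'n hu'
  by_cases hc : p ≤ j'
  · have := hmin i' j' h1' (by omega) hc hj'n hu'
    omega
  · have hu'' : kUnique S n k i' p := kUnique_mono S n k i' hu' (by omega) (by omega)
    have := hmin i' p h1' (by omega) (le_refl _) hpn hu''
    omega
end

section
/- For positions p in a string S with k < n: if sls_p^k exists and no right extension case applies, then any shortest k-mismatch unique substring covering p that starts at the start position of some LSUS has length equal to |sls_p^k|; in particular |sus_p^k| ≤ |sls_p^k| always holds, and |sus_p^k| ≤ |sus_{p−1}^k| + 1 for p ≥ 2. -/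
/-- `S[i..e]` is the rightmost-irrelevant shortest `k`-mismatch LSUS covering `p`:
an LSUS covering `p` of minimum length among LSUSes covering `p`. -/
def isSLS {α : Type*} [DecidableEq α] (S : ℕ → α) (n k p i e : ℕ) : Prop :=
  isLSUS S n k i e ∧ i ≤ p ∧ p ≤ e ∧
    ∀ i' e', isLSUS S n k i' e' → i' ≤ p → p ≤ e' → e - i ≤ e' - i'

/-- `|sus_p^k| ≤ |sls_p^k|`; `|sus_p^k| ≤ |sus_{p−1}^k| + 1`; and if the
right-extension case does not apply (i.e. `sus_p^k` is itself an LSUS), then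
`|sus_p^k| = |sls_p^k|`. -/
theorem sus_length_bounds {α : Type*} [DecidableEq α] (S : ℕ → α)
    (n k p i j i0 e0 i' j' : ℕ) (hk : k < n) (hp : 2 ≤ p)
    (hsus : isSUS S n k p i j) (hsls : isSLS S n k p i0 e0)
    (hsus' : isSUS S n k (p - 1) i' j') :
    j - i ≤ e0 - i0 ∧ j - i ≤ (j' - i') + 1 ∧
      (isLSUS S n k i j → j - i = e0 - i0) := by
  obtain ⟨hi1, hip, hpj, hjn, hu, hmin⟩ := hsus
  obtain ⟨⟨hi01, hi0e0, he0n, hu0, _⟩, hi0p, hpe0, hslsmin⟩ := hsls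
  obtain ⟨hi'1, hi'p, hpj', hj'n, hu', _⟩ := hsus'
  have part1 : j - i ≤ e0 - i0 := hmin i0 e0 hi01 hi0p hpe0 he0n hu0
  refine ⟨part1, ?_, fun hL => le_antisymm part1 (hslsmin i j hL hip hpj)⟩
  by_cases hc : p ≤ j'
  · have := hmin i' j' hi'1 (le_trans hi'p (Nat.sub_le p 1)) hc hj'n hu'
    omega
  · have hpj1 : p = j' + 1 := by omega
    have hj1n : j' + 1 ≤ n := by omega
    have huext : kUnique S n k i' (j' + 1) := by
      intro ⟨ii, hne, h1, hbd, hmis⟩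
      refine hu' ⟨ii, hne, h1, by omega, le_trans ?_ hmis⟩
      exact Finset.card_le_card (Finset.filter_subset_filter _
        (Finset.range_subset_range.2 (by omega)))
    have := hmin i' (j' + 1) hi'1 (le_trans hi'p (Nat.sub_le p 1))
      (by omega) hj1n huext
    omega
end
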